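/- Let X be a Banach space, let (x_n) be a bounded sequence in X, and let G be a subspace of the dual X* such that φ(x_n) → 0 as n → ∞ for every φ ∈ G. Then the set K_σ^+({x_n}) = {∑_{i=1}^∞ t_i x_i : 0 ≤ t_i ≤ 1 for all i, ∑_{i=1}^∞ t_i ≤ 1} is sequentially compact in the topology σ(X,G): every sequence in K_σ^+({x_n}) has a subsequence converging, in the topology σ(X,G), to a point of K_σ^+({x_n}). -/

import Mathlib

open Filter Topology

noncomputable section

/-- The σ-convex conical hull `K_σ^+({x_n})` of a sequence: all sums `∑ t_i x_i` with
`0 ≤ t_i ≤ 1` and `∑ t_i ≤ 1` (the series converging in norm). -/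
def KplusSigma {X : Type*} [NormedAddCommGroup X] [NormedSpace ℝ X] (x : ℕ → X) : Set X :=
  {v | ∃ t : ℕ → ℝ, (∀ i, 0 ≤ t i) ∧ (∀ i, t i ≤ 1) ∧ Summable t ∧ (∑' i, t i) ≤ 1 ∧
    HasSum (fun i => t i • x i) v}

/-- The topology σ(X,G) of pointwise convergence against the functionals of `G ⊆ X*`. -/
def sigmaTop {X : Type*} [NormedAddCommGroup X] [NormedSpace ℝ X]
    (G : Submodule ℝ (X →L[ℝ] ℝ)) : TopologicalSpace X :=
  TopologicalSpace.induced (fun x => fun φ : G => (φ : X →L[ℝ] ℝ) x) Pi.topologicalSpace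

/-! Write `v n = ∑ a n i • x i`. The coefficient sequences lie in the compact cube `[0,1]^ℕ`,
so a subsequence converges coordinatewise to some `b`; passing to the limit in the partial
sums keeps `b` in the positive part of the unit ball of `ℓ¹`, and we put `w = ∑ b i • x i`.
For `φ ∈ G` the numbers `φ (x i)` form a null sequence, and against a null sequence
coordinatewise convergence in that ball implies convergence of the pairings: the first `N`
terms converge, and the tails are uniformly small because the total mass is at most one. -/

open Finset

lemma dist_tsum_mul_sum_range_le {a c : ℕ → ℝ} (ha0 : ∀ i, 0 ≤ a i) (ha : Summable a)
    (ha1 : ∑' i, a i ≤ 1) {N : ℕ} {ε : ℝ} (hc : ∀ i, N ≤ i → |c i| ≤ ε) :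
    dist (∑' i, a i * c i) (∑ i ∈ range N, a i * c i) ≤ ε := by
  have haN : Summable fun i => a (i + N) := (summable_nat_add_iff N).2 ha
  have hbound : ∀ i, ‖a (i + N) * c (i + N)‖ ≤ a (i + N) * ε := fun i => by
    rw [Real.norm_eq_abs, abs_mul, abs_of_nonneg (ha0 _)]
    exact mul_le_mul_of_nonneg_left (hc _ (Nat.le_add_left N i)) (ha0 _)
  have hsum : Summable fun i => a i * c i :=
    (summable_nat_add_iff N).1 (.of_norm_bounded (haN.mul_right ε) hbound)
  have hε : 0 ≤ ε := (abs_nonneg _).trans (hc N le_rfl)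
  have htail : ∑' i, a (i + N) ≤ 1 := by
    have := ha.sum_add_tsum_nat_add N
    linarith [sum_nonneg fun i (_ : i ∈ range N) => ha0 i]
  rw [Real.dist_eq, ← hsum.sum_add_tsum_nat_add N, add_sub_cancel_left]
  calc |∑' i, a (i + N) * c (i + N)| ≤ ∑' i, a (i + N) * ε :=
        tsum_of_norm_bounded (haN.mul_right ε).hasSum hbound
    _ = (∑' i, a (i + N)) * ε := tsum_mul_right
    _ ≤ ε := mul_le_of_le_one_left hε htail

lemma tendsto_tsum_mul_of_tendsto_zero {ι : Type*} {l : Filter ι} {a : ι → ℕ → ℝ}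
    {b c : ℕ → ℝ} (ha0 : ∀ n i, 0 ≤ a n i) (ha : ∀ n, Summable (a n))
    (ha1 : ∀ n, ∑' i, a n i ≤ 1) (hb0 : ∀ i, 0 ≤ b i) (hb : Summable b) (hb1 : ∑' i, b i ≤ 1)
    (hab : Tendsto a l (𝓝 b)) (hc : Tendsto c atTop (𝓝 0)) :
    Tendsto (fun n => ∑' i, a n i * c i) l (𝓝 (∑' i, b i * c i)) := by
  refine Metric.tendsto_nhds.2 fun ε hε => ?_
  obtain ⟨N, hN⟩ := eventually_atTop.1 (Metric.tendsto_nhds.1 hc (ε / 4) (by linarith))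
  replace hN : ∀ i, N ≤ i → |c i| ≤ ε / 4 := fun i hi => by
    simpa only [Real.dist_0_eq_abs] using (hN i hi).le
  have hhead : Tendsto (fun n => ∑ i ∈ range N, a n i * c i) l
      (𝓝 (∑ i ∈ range N, b i * c i)) :=
    tendsto_finsetSum _ fun i _ => (tendsto_pi_nhds.1 hab i).mul_const (c i)
  filter_upwards [Metric.tendsto_nhds.1 hhead (ε / 4) (by linarith)] with n hn
  calc dist (∑' i, a n i * c i) (∑' i, b i * c i)
      ≤ dist (∑' i, a n i * c i) (∑ i ∈ range N, a n i * c i)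
        + dist (∑ i ∈ range N, a n i * c i) (∑ i ∈ range N, b i * c i)
        + dist (∑ i ∈ range N, b i * c i) (∑' i, b i * c i) := dist_triangle4 _ _ _ _
    _ < ε := by
      rw [dist_comm (∑ i ∈ range N, b i * c i)]
      linarith [dist_tsum_mul_sum_range_le (ha0 n) (ha n) (ha1 n) hN,
        dist_tsum_mul_sum_range_le hb0 hb hb1 hN]

lemma summable_of_tendsto_of_tsum_le {ι : Type*} {l : Filter ι} [l.NeBot] {a : ι → ℕ → ℝ}
    {b : ℕ → ℝ} {C : ℝ} (ha0 : ∀ n i, 0 ≤ a n i) (ha : ∀ n, Summable (a n))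
    (haC : ∀ n, ∑' i, a n i ≤ C) (hb0 : ∀ i, 0 ≤ b i) (hab : Tendsto a l (𝓝 b)) :
    Summable b ∧ ∑' i, b i ≤ C := by
  have hpartial : ∀ k, ∑ i ∈ range k, b i ≤ C := fun k =>
    le_of_tendsto' (tendsto_finsetSum _ fun i _ => tendsto_pi_nhds.1 hab i) fun n =>
      ((ha n).sum_le_tsum _ fun i _ => ha0 n i).trans (haC n)
  exact ⟨summable_of_sum_range_le hb0 hpartial, Real.tsum_le_of_sum_range_le hb0 hpartial⟩

lemma tendsto_sigmaTop_iff {X ι : Type*} [NormedAddCommGroup X] [NormedSpace ℝ X]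
    {G : Submodule ℝ (X →L[ℝ] ℝ)} {l : Filter ι} {v : ι → X} {w : X} :
    Tendsto v l (@nhds X (sigmaTop G) w) ↔ ∀ φ ∈ G, Tendsto (fun n => φ (v n)) l (𝓝 (φ w)) := by
  rw [sigmaTop, nhds_induced, tendsto_comap_iff, tendsto_pi_nhds, Subtype.forall]
  rfl

lemma ContinuousLinearMap.apply_eq_tsum_mul {X : Type*} [AddCommGroup X] [TopologicalSpace X]
    [Module ℝ X] (φ : X →L[ℝ] ℝ) {t : ℕ → ℝ} {x : ℕ → X} {v : X}
    (hv : HasSum (fun i => t i • x i) v) : φ v = ∑' i, t i * φ (x i) := by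
  simpa only [map_smul, smul_eq_mul] using ((φ.hasSum hv).tsum_eq).symm

/-- if `(x_n)` is bounded and `φ(x_n) → 0` for every `φ ∈ G`, then
`K_σ^+({x_n})` is σ(X,G)-sequentially compact. -/
theorem stmt13 {X : Type*} [NormedAddCommGroup X] [NormedSpace ℝ X] [CompleteSpace X]
    (x : ℕ → X) (hbdd : Bornology.IsBounded (Set.range x))
    (G : Submodule ℝ (X →L[ℝ] ℝ))
    (hG0 : ∀ φ ∈ G, Tendsto (fun n => φ (x n)) atTop (𝓝 (0:ℝ))) :
    ∀ v : ℕ → X, (∀ n, v n ∈ KplusSigma x) →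
      ∃ w ∈ KplusSigma x, ∃ σ : ℕ → ℕ, StrictMono σ ∧
        Tendsto (fun n => v (σ n)) atTop (@nhds X (sigmaTop G) w) := by
  intro v hv
  choose a ha0 ha1 ha hatsum hav using hv
  obtain ⟨b, hbI, σ, hσ, hab⟩ := (isCompact_univ_pi fun _ => isCompact_Icc).tendsto_subseq
    (x := a) fun n i _ => ⟨ha0 n i, ha1 n i⟩
  have hb0 : ∀ i, 0 ≤ b i := fun i => (hbI i trivial).1
  obtain ⟨hb, hb1⟩ := summable_of_tendsto_of_tsum_le (fun n => ha0 (σ n)) (fun n => ha (σ n))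
    (fun n => hatsum (σ n)) hb0 hab
  obtain ⟨C, hC⟩ := isBounded_iff_forall_norm_le.1 hbdd
  have hbx : Summable fun i => b i • x i := .of_norm_bounded (hb.mul_right C) fun i => by
    rw [norm_smul, Real.norm_of_nonneg (hb0 i)]
    exact mul_le_mul_of_nonneg_left (hC _ ⟨i, rfl⟩) (hb0 i)
  refine ⟨_, ⟨b, hb0, fun i => (hbI i trivial).2, hb, hb1, hbx.hasSum⟩, σ, hσ,
    tendsto_sigmaTop_iff.2 fun φ hφ => ?_⟩
  rw [φ.apply_eq_tsum_mul hbx.hasSum]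
  refine (tendsto_tsum_mul_of_tendsto_zero (fun n => ha0 (σ n)) (fun n => ha (σ n))
    (fun n => hatsum (σ n)) hb0 hb hb1 hab (hG0 φ hφ)).congr fun n => ?_
  exact (φ.apply_eq_tsum_mul (hav (σ n))).symm
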